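/- Let X = (x_j)_{j∈ℤ} be a strictly increasing δ-separated sequence with multiplicity function μ_X : X → {0,...,S}, and let (Y, μ_Y) be a weak limit of integer translates of (X, μ_X), i.e., there are integers k_n with Σ_{x∈X} (1+μ_X(x)) δ_{x-k_n} → Σ_{y∈Y} (1+μ_Y(y)) δ_y in the weak-* topology against C_c(ℝ). Then the weighted maximum gaps satisfy mg(Y, μ_Y) ≤ mg(X, μ_X), where mg(Z, μ) = sup over consecutive points z < z' of Z of (z'-z)/(1+min(μ(z), μ(z'))). -/

import Mathlib

/-!
Up to any `ε > 0`, every gap of the limit is a gap of `X` whose endpoint multiplicities are no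
larger. Testing the convergence against bumps around `y j`, around `y (j + 1)` and inside the gap
between them shows that, for large `n`, the translates `x i - k n` have points near both endpoints
and none in between, and that near each endpoint they have multiplicity at most the limit one: a
bump equal to `1` there has integral close to `1 + μY`, and each translated point contributes at
least its own weight. The two translated points straddling the empty middle are consecutive.
-/

open Set Filter Topology Metric

lemma tendsto_cofinite_cocompact_of_le_sub_succ {x : ℤ → ℝ} {δ : ℝ} (hδ : 0 < δ)
    (hsep : ∀ j, δ ≤ x (j + 1) - x j) : Tendsto x cofinite (cocompact ℝ) := by
  have hg : Monotone fun j : ℤ => x j - δ * j :=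
    monotone_int_of_le_succ fun j => by push_cast; linarith [hsep j]
  rw [Int.cofinite_eq, cocompact_eq_atBot_atTop]
  refine Tendsto.sup_sup (tendsto_atBot_mono' _ ?_ (tendsto_atBot_add_const_left _ (x 0)
      ((tendsto_intCast_atBot_iff.2 tendsto_id).const_mul_atBot hδ)))
    (tendsto_atTop_mono' _ ?_ (tendsto_atTop_add_const_left _ (x 0)
      (tendsto_intCast_atTop_atTop.const_mul_atTop hδ)))
  · filter_upwards [eventually_le_atBot 0] with j hj
    have := hg hj
    simp only [id, Int.cast_zero, mul_zero, sub_zero] at this ⊢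
    linarith
  · filter_upwards [eventually_ge_atTop 0] with j hj
    have := hg hj
    simp only [Int.cast_zero, mul_zero, sub_zero] at this
    linarith

lemma summable_mul_comp_of_le_sub_succ {x : ℤ → ℝ} {δ : ℝ} (hδ : 0 < δ)
    (hsep : ∀ j, δ ≤ x (j + 1) - x j) (w : ℤ → ℝ) {f : ℝ → ℝ} (hf : HasCompactSupport f) :
    Summable fun j => w j * f (x j) :=
  summable_of_hasFiniteSupport <|
    (tendsto_cofinite_cocompact_iff.1 (tendsto_cofinite_cocompact_of_le_sub_succ hδ hsep) _
      hf).subset fun _ hj => subset_tsupport f (right_ne_zero_of_mul hj)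

lemma Monotone.exists_lt_le_succ {α : Type*} [LinearOrder α] {z : ℤ → α} (hz : Monotone z)
    {p q : ℤ} {t : α} (hp : z p < t) (hq : t ≤ z q) :
    ∃ i, p ≤ i ∧ i < q ∧ z i < t ∧ t ≤ z (i + 1) := by
  obtain ⟨i, hi, hmax⟩ := Int.exists_greatest_of_bdd (P := fun i => z i < t)
    ⟨q, fun i hi => (hz.reflect_lt (hi.trans_le hq)).le⟩ ⟨p, hp⟩
  exact ⟨i, hmax p hp, hz.reflect_lt (hi.trans_le hq), hi,
    not_lt.1 fun h => by linarith [hmax _ h]⟩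

lemma Monotone.le_dist_of_ne {y : ℤ → ℝ} (hy : Monotone y) {j : ℤ} {ρ : ℝ}
    (h₁ : ρ ≤ y j - y (j - 1)) (h₂ : ρ ≤ y (j + 1) - y j) : ∀ i ≠ j, ρ ≤ dist (y i) (y j) := by
  intro i hi
  rw [Real.dist_eq, le_abs]
  rcases lt_or_gt_of_ne hi with h | h
  · exact Or.inr (by linarith [hy (show i ≤ j - 1 by omega)])
  · exact Or.inl (by linarith [hy (show j + 1 ≤ i by omega)])

lemma tsum_mul_bump_of_le_dist {y : ℤ → ℝ} {j : ℤ} {ρ : ℝ}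
    (hiso : ∀ i ≠ j, ρ ≤ dist (y i) (y j)) (φ : ContDiffBump (y j)) (hφ : φ.rOut ≤ ρ)
    (w : ℤ → ℝ) : ∑' i, w i * φ (y i) = w j := by
  rw [tsum_eq_single j fun i hi => by rw [φ.zero_of_le_dist (hφ.trans (hiso i hi)), mul_zero],
    φ.one_of_mem_closedBall (mem_closedBall_self φ.rIn_pos.le), mul_one]

lemma tsum_mul_bump_of_gap {y : ℤ → ℝ} (hy : Monotone y) {j : ℤ} {c : ℝ} (φ : ContDiffBump c)
    (h₁ : y j ≤ c - φ.rOut) (h₂ : c + φ.rOut ≤ y (j + 1)) (w : ℤ → ℝ) :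
    ∑' i, w i * φ (y i) = 0 := by
  refine (tsum_congr fun i => ?_).trans tsum_zero
  rw [φ.zero_of_le_dist, mul_zero]
  rw [Real.dist_eq, le_abs]
  rcases le_or_gt i j with h | h
  · exact Or.inr (by linarith [hy h])
  · exact Or.inl (by linarith [hy (show j + 1 ≤ i by omega)])

lemma eventually_exists_ne_zero_of_tendsto_tsum {ι β : Type*} {F : Filter β} {g : β → ι → ℝ}
    {l : ℝ} (h : Tendsto (fun n => ∑' i, g n i) F (𝓝 l)) (hl : l ≠ 0) :
    ∀ᶠ n in F, ∃ i, g n i ≠ 0 := by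
  filter_upwards [h.eventually_ne hl] with n hn
  by_contra! h0
  simp [h0] at hn

lemma eventually_forall_lt_of_tendsto_tsum {ι β : Type*} {F : Filter β} {g : β → ι → ℝ}
    {l b : ℝ} (hg : ∀ n i, 0 ≤ g n i) (hs : ∀ n, Summable (g n))
    (h : Tendsto (fun n => ∑' i, g n i) F (𝓝 l)) (hlb : l < b) :
    ∀ᶠ n in F, ∀ i, g n i < b := by
  filter_upwards [h.eventually_lt_const hlb] with n hn i
  exact ((hs n).le_tsum i fun j _ => hg n j).trans_lt hn

def WeakLimitOfTranslates (x : ℤ → ℝ) (μX : ℤ → ℕ) (y : ℤ → ℝ) (μY : ℤ → ℕ) (k : ℕ → ℤ) :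
    Prop :=
  ∀ f : ℝ → ℝ, Continuous f → HasCompactSupport f →
    Tendsto (fun n => ∑' j : ℤ, (1 + (μX j : ℝ)) * f (x j - k n)) atTop
      (𝓝 (∑' j : ℤ, (1 + (μY j : ℝ)) * f (y j)))

namespace WeakLimitOfTranslates

variable {x : ℤ → ℝ} {μX : ℤ → ℕ} {y : ℤ → ℝ} {μY : ℤ → ℕ} {k : ℕ → ℤ}
  (hconv : WeakLimitOfTranslates x μX y μY k)
include hconv

lemma eventually_exists_mem_ball {j : ℤ} {ρ : ℝ} (hρ : 0 < ρ)
    (hiso : ∀ i ≠ j, ρ ≤ dist (y i) (y j)) : ∀ᶠ n in atTop, ∃ i, x i - k n ∈ ball (y j) ρ := by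
  let φ : ContDiffBump (y j) := ⟨ρ / 2, ρ, half_pos hρ, half_lt_self hρ⟩
  have hlim := hconv φ φ.continuous φ.hasCompactSupport
  rw [tsum_mul_bump_of_le_dist hiso φ le_rfl] at hlim
  filter_upwards [eventually_exists_ne_zero_of_tendsto_tsum hlim (by positivity)] with n ⟨i, hi⟩
  exact ⟨i, φ.support_eq ▸ right_ne_zero_of_mul hi⟩

lemma eventually_one_add_lt {δ : ℝ} (hδ : 0 < δ) (hsep : ∀ j, δ ≤ x (j + 1) - x j) {c : ℝ}
    (φ : ContDiffBump c) {b : ℝ} (hb : ∑' i, (1 + (μY i : ℝ)) * φ (y i) < b) :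
    ∀ᶠ n in atTop, ∀ i, x i - k n ∈ closedBall c φ.rIn → 1 + (μX i : ℝ) < b := by
  have hs (n : ℕ) : Summable fun i => (1 + (μX i : ℝ)) * φ (x i - k n) :=
    summable_mul_comp_of_le_sub_succ (x := fun i => x i - k n) hδ (fun i => by simpa using hsep i)
      _ φ.hasCompactSupport
  filter_upwards [eventually_forall_lt_of_tendsto_tsum (fun n i => mul_nonneg (by positivity)
    φ.nonneg) hs (hconv φ φ.continuous φ.hasCompactSupport) hb] with n hn i hi
  simpa [φ.one_of_mem_closedBall hi] using hn i

lemma eventually_le_of_mem_closedBall {δ : ℝ} (hδ : 0 < δ) (hsep : ∀ j, δ ≤ x (j + 1) - x j)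
    {j : ℤ} {ρ ρ' : ℝ} (hρ : 0 < ρ) (hρρ' : ρ < ρ') (hiso : ∀ i ≠ j, ρ' ≤ dist (y i) (y j)) :
    ∀ᶠ n in atTop, ∀ i, x i - k n ∈ closedBall (y j) ρ → μX i ≤ μY j := by
  let φ : ContDiffBump (y j) := ⟨ρ, ρ', hρ, hρρ'⟩
  have hb : ∑' i, (1 + (μY i : ℝ)) * φ (y i) < 1 + (μY j + 1 : ℕ) := by
    rw [tsum_mul_bump_of_le_dist hiso φ le_rfl]
    push_cast
    linarith
  filter_upwards [hconv.eventually_one_add_lt hδ hsep φ hb] with n hn i hi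
  exact Nat.lt_succ_iff.1 (by exact_mod_cast (add_lt_add_iff_left 1).1 (hn i hi))

lemma eventually_notMem_closedBall {δ : ℝ} (hδ : 0 < δ) (hsep : ∀ j, δ ≤ x (j + 1) - x j)
    (hy : Monotone y) {j : ℤ} {c ρ ρ' : ℝ} (hρ : 0 < ρ) (hρρ' : ρ < ρ') (h₁ : y j ≤ c - ρ')
    (h₂ : c + ρ' ≤ y (j + 1)) : ∀ᶠ n in atTop, ∀ i, x i - k n ∉ closedBall c ρ := by
  let φ : ContDiffBump c := ⟨ρ, ρ', hρ, hρρ'⟩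
  have hb : ∑' i, (1 + (μY i : ℝ)) * φ (y i) < 1 := by
    rw [tsum_mul_bump_of_gap hy φ h₁ h₂]
    exact one_pos
  filter_upwards [hconv.eventually_one_add_lt hδ hsep φ hb] with n hn i hi
  linarith [hn i hi, (μX i).cast_nonneg (α := ℝ)]

lemma exists_gap_sub_four_mul_le {δ : ℝ} (hδ : 0 < δ) (hsep : ∀ j, δ ≤ x (j + 1) - x j)
    (hy : Monotone y) (j : ℤ) {r : ℝ} (hr : 0 < r) (h₁ : 3 * r ≤ y j - y (j - 1))
    (h₂ : 5 * r ≤ y (j + 1) - y j) (h₃ : 3 * r ≤ y (j + 1 + 1) - y (j + 1)) :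
    ∃ i, y (j + 1) - y j - 4 * r ≤ x (i + 1) - x i ∧
      μX i ≤ μY j ∧ μX (i + 1) ≤ μY (j + 1) := by
  set L := y j
  set R := y (j + 1)
  have hisoL := hy.le_dist_of_ne h₁ (by linarith)
  have hisoR := hy.le_dist_of_ne (j := j + 1) (by rw [add_sub_cancel_right]; linarith) h₃
  obtain ⟨n, ⟨p, hp⟩, ⟨q, hq⟩, hμL, hμR, hmid⟩ :=
    ((hconv.eventually_exists_mem_ball (ρ := 2 * r) (by positivity)
      fun i hi => by linarith [hisoL i hi]).and <|
    (hconv.eventually_exists_mem_ball (ρ := 2 * r) (by positivity)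
      fun i hi => by linarith [hisoR i hi]).and <|
    (hconv.eventually_le_of_mem_closedBall hδ hsep (ρ := 2 * r) (by positivity) (by linarith)
      hisoL).and <|
    (hconv.eventually_le_of_mem_closedBall hδ hsep (ρ := 2 * r) (by positivity) (by linarith)
      hisoR).and <|
    hconv.eventually_notMem_closedBall hδ hsep hy (j := j) (c := (L + R) / 2)
      (ρ := (R - L) / 2 - 2 * r) (ρ' := (R - L) / 2 - r)
      (by linarith) (by linarith) (by linarith) (by linarith)).exists
  have hx : Monotone fun i : ℤ => x i - k n := monotone_int_of_le_succ fun i => by linarith [hsep i]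
  simp only [Real.ball_eq_Ioo, Real.closedBall_eq_Icc, mem_Ioo, mem_Icc] at hp hq hμL hμR hmid
  -- `i` is the last translated point left of the empty middle `[L + 2r, R - 2r]`
  obtain ⟨i, hpi, hiq, hi, hi₁⟩ :=
    hx.exists_lt_le_succ (p := p) (q := q) (t := L + 2 * r) (by linarith) (by linarith)
  have hpi' : x p - k n ≤ x i - k n := hx hpi
  have hiq' : x (i + 1) - k n ≤ x q - k n := hx (show i + 1 ≤ q by omega)
  have hi₁' : R - 2 * r < x (i + 1) - k n := by
    by_contra! h
    exact hmid (i + 1) ⟨by linarith, by linarith⟩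
  exact ⟨i, by linarith, hμL i ⟨by linarith, by linarith⟩, hμR (i + 1) ⟨by linarith, by linarith⟩⟩

lemma exists_gap_sub_le {δ : ℝ} (hδ : 0 < δ) (hsep : ∀ j, δ ≤ x (j + 1) - x j)
    (hy : StrictMono y) (j : ℤ) {ε : ℝ} (hε : 0 < ε) :
    ∃ i, y (j + 1) - y j - ε ≤ x (i + 1) - x i ∧ μX i ≤ μY j ∧ μX (i + 1) ≤ μY (j + 1) := by
  set g := min (y j - y (j - 1)) (min (y (j + 1) - y j) (y (j + 1 + 1) - y (j + 1)))
  have hg : 0 < g := by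
    simp only [g, lt_min_iff, sub_pos]
    exact ⟨hy (sub_one_lt j), hy (lt_add_one j), hy (lt_add_one _)⟩
  have hg₁ : g ≤ y j - y (j - 1) := min_le_left _ _
  have hg₂ : g ≤ y (j + 1) - y j := (min_le_right _ _).trans (min_le_left _ _)
  have hg₃ : g ≤ y (j + 1 + 1) - y (j + 1) := (min_le_right _ _).trans (min_le_right _ _)
  have hr : 0 < min (ε / 4) (g / 5) := lt_min (by positivity) (by positivity)
  have hrε := min_le_left (ε / 4) (g / 5)
  have hrg := min_le_right (ε / 4) (g / 5)
  obtain ⟨i, hwide, hμ⟩ := hconv.exists_gap_sub_four_mul_le hδ hsep hy.monotone j hr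
    (by linarith) (by linarith) (by linarith)
  exact ⟨i, by linarith, hμ⟩

end WeakLimitOfTranslates

theorem stmt_19_general (x : ℤ → ℝ)
    (δ : ℝ) (hδ : 0 < δ) (hsep : ∀ j : ℤ, δ ≤ x (j + 1) - x j)
    (μX : ℤ → ℕ)
    (y : ℤ → ℝ) (hymono : StrictMono y) (μY : ℤ → ℕ)
    (k : ℕ → ℤ)
    (hconv : ∀ f : ℝ → ℝ, Continuous f → HasCompactSupport f →
      Filter.Tendsto (fun n => ∑' j : ℤ, (1 + (μX j : ℝ)) * f (x j - k n))
        Filter.atTop (nhds (∑' j : ℤ, (1 + (μY j : ℝ)) * f (y j))))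
    (a : ℝ)
    (hgap : ∀ j : ℤ, x (j + 1) - x j ≤ a * (1 + (min (μX j) (μX (j + 1)) : ℝ))) :
    ∀ j : ℤ, y (j + 1) - y j ≤ a * (1 + (min (μY j) (μY (j + 1)) : ℝ)) := by
  intro j
  refine le_of_forall_pos_le_add fun ε hε => ?_
  obtain ⟨i, hwide, hμL, hμR⟩ :=
    WeakLimitOfTranslates.exists_gap_sub_le hconv hδ hsep hymono j hε
  have ha : 0 ≤ a :=
    nonneg_of_mul_nonneg_left (b := 1 + (min (μX i) (μX (i + 1)) : ℝ))
      (by linarith [hsep i, hgap i]) (by positivity)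
  calc y (j + 1) - y j ≤ x (i + 1) - x i + ε := by linarith
    _ ≤ a * (1 + (min (μX i) (μX (i + 1)) : ℝ)) + ε := by linarith [hgap i]
    _ ≤ a * (1 + (min (μY j) (μY (j + 1)) : ℝ)) + ε := by gcongr

/-- The weighted maximum gap does not increase under weak limits of integer translates. -/
theorem stmt_19 (S : ℕ) (x : ℤ → ℝ) (hmono : StrictMono x)
    (δ : ℝ) (hδ : 0 < δ) (hsep : ∀ j : ℤ, δ ≤ x (j + 1) - x j)
    (μX : ℤ → ℕ) (hμX : ∀ j, μX j ≤ S)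
    (y : ℤ → ℝ) (hymono : StrictMono y) (μY : ℤ → ℕ)
    (k : ℕ → ℤ)
    (hconv : ∀ f : ℝ → ℝ, Continuous f → HasCompactSupport f →
      Filter.Tendsto (fun n => ∑' j : ℤ, (1 + (μX j : ℝ)) * f (x j - k n))
        Filter.atTop (nhds (∑' j : ℤ, (1 + (μY j : ℝ)) * f (y j))))
    (a : ℝ)
    (hgap : ∀ j : ℤ, x (j + 1) - x j ≤ a * (1 + (min (μX j) (μX (j + 1)) : ℝ))) :
    ∀ j : ℤ, y (j + 1) - y j ≤ a * (1 + (min (μY j) (μY (j + 1)) : ℝ)) :=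
  stmt_19_general x δ hδ hsep μX y hymono μY k hconv a hgap
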